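/- Let G be a subgroup of A × B × C and let N = S_AB · S_AC · S_BC where S_AB = {(a,b,1) ∈ G}, S_AC = {(a,1,c) ∈ G}, S_BC = {(1,b,c) ∈ G}. Then N ◁ G and there are isomorphisms G/N ≅ G_A/N_A ≅ G_B/N_B ≅ G_C/N_C, where G_X = π_X(G) and N_X = π_X(N) for X ∈ {A,B,C}. -/

import Mathlib

/-!
`S_AB`, `S_AC`, `S_BC` are the intersections of `G` with the kernels of `π_C`, `π_B`, `π_A`, so
each is normalized by `G`, and hence so is their product `N`. Moreover `G ∩ ker π_A = S_BC ⊆ N`,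
so for `g ∈ G` the condition `π_A g ∈ π_A N` already forces `g ∈ N`; thus `N` is exactly the
kernel of `G → G_A / N_A`, which is surjective, and `G / N ≅ G_A / N_A`. The same holds for
`B` and `C`.
-/

/-- Projection of `A × B × C` onto `A`. -/
def projA (A B C : Type*) [Group A] [Group B] [Group C] : A × B × C →* A :=
  MonoidHom.fst A (B × C)

/-- Projection of `A × B × C` onto `B`. -/
def projB (A B C : Type*) [Group A] [Group B] [Group C] : A × B × C →* B :=
  (MonoidHom.fst B C).comp (MonoidHom.snd A (B × C))

/-- Projection of `A × B × C` onto `C`. -/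
def projC (A B C : Type*) [Group A] [Group B] [Group C] : A × B × C →* C :=
  (MonoidHom.snd B C).comp (MonoidHom.snd A (B × C))

namespace Subgroup

variable {X Y : Type*} [Group X] [Group Y]

lemma conj_mem_inf_ker {G : Subgroup X} (f : X →* Y) {g x : X} (hg : g ∈ G)
    (hx : x ∈ G ⊓ f.ker) : g * x * g⁻¹ ∈ G ⊓ f.ker :=
  mem_inf.2 ⟨mul_mem (mul_mem hg (mem_inf.1 hx).1) (inv_mem hg),
    f.normal_ker.conj_mem x (mem_inf.1 hx).2 g⟩

lemma mem_of_map_mem_map_of_inf_ker_le (f : X →* Y) {G N : Subgroup X} (hNG : N ≤ G)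
    (hker : G ⊓ f.ker ≤ N) {g : X} (hg : g ∈ G) (h : f g ∈ N.map f) : g ∈ N := by
  obtain ⟨m, hm, hfm⟩ := h
  have hgm : g * m⁻¹ ∈ N := hker (mem_inf.2 ⟨mul_mem hg (inv_mem (hNG hm)), by simp [hfm]⟩)
  simpa using mul_mem hgm hm

noncomputable def quotientMulEquivMapOfInfKerLe (f : X →* Y) (G N : Subgroup X)
    [(N.subgroupOf G).Normal] [((N.map f).subgroupOf (G.map f)).Normal]
    (hNG : N ≤ G) (hker : G ⊓ f.ker ≤ N) :
    (↥G ⧸ N.subgroupOf G) ≃* (↥(G.map f) ⧸ (N.map f).subgroupOf (G.map f)) :=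
  let φ := (QuotientGroup.mk' ((N.map f).subgroupOf (G.map f))).comp (f.subgroupMap G)
  have hφ : φ.ker = N.subgroupOf G := by
    ext g
    simp only [φ, MonoidHom.mem_ker, MonoidHom.comp_apply, QuotientGroup.mk'_apply,
      QuotientGroup.eq_one_iff, mem_subgroupOf]
    exact ⟨mem_of_map_mem_map_of_inf_ker_le f hNG hker g.2, fun h ↦ ⟨g, h, rfl⟩⟩
  (QuotientGroup.quotientMulEquivOfEq hφ.symm).trans <|
    QuotientGroup.quotientKerEquivOfSurjective φ <|
      (QuotientGroup.mk'_surjective _).comp (f.subgroupMap_surjective G)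

end Subgroup

open Subgroup in
theorem stmt3 {A B C : Type*} [Group A] [Group B] [Group C]
    (G SAB SAC SBC N : Subgroup (A × B × C))
    (hSAB : ∀ g : A × B × C, g ∈ SAB ↔ g ∈ G ∧ g.2.2 = 1)
    (hSAC : ∀ g : A × B × C, g ∈ SAC ↔ g ∈ G ∧ g.2.1 = 1)
    (hSBC : ∀ g : A × B × C, g ∈ SBC ↔ g ∈ G ∧ g.1 = 1)
    (hN : ∀ g : A × B × C, g ∈ N ↔ ∃ x ∈ SAB, ∃ y ∈ SAC, ∃ z ∈ SBC, g = x * y * z)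
    [(N.subgroupOf G).Normal]
    [((N.map (projA A B C)).subgroupOf (G.map (projA A B C))).Normal]
    [((N.map (projB A B C)).subgroupOf (G.map (projB A B C))).Normal]
    [((N.map (projC A B C)).subgroupOf (G.map (projC A B C))).Normal] :
    (∀ g ∈ G, ∀ n ∈ N, g * n * g⁻¹ ∈ N) ∧
    Nonempty ((↥G ⧸ N.subgroupOf G) ≃*
      (↥(G.map (projA A B C)) ⧸ (N.map (projA A B C)).subgroupOf (G.map (projA A B C)))) ∧
    Nonempty
      ((↥(G.map (projA A B C)) ⧸ (N.map (projA A B C)).subgroupOf (G.map (projA A B C))) ≃*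
       (↥(G.map (projB A B C)) ⧸ (N.map (projB A B C)).subgroupOf (G.map (projB A B C)))) ∧
    Nonempty
      ((↥(G.map (projB A B C)) ⧸ (N.map (projB A B C)).subgroupOf (G.map (projB A B C))) ≃*
       (↥(G.map (projC A B C)) ⧸ (N.map (projC A B C)).subgroupOf (G.map (projC A B C)))) := by
  obtain rfl : SAB = G ⊓ (projC A B C).ker := by
    ext; rw [hSAB, mem_inf, MonoidHom.mem_ker]; rfl
  obtain rfl : SAC = G ⊓ (projB A B C).ker := by
    ext; rw [hSAC, mem_inf, MonoidHom.mem_ker]; rfl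
  obtain rfl : SBC = G ⊓ (projA A B C).ker := by
    ext; rw [hSBC, mem_inf, MonoidHom.mem_ker]; rfl
  have hNG : N ≤ G := by
    intro g hg
    obtain ⟨x, hx, y, hy, z, hz, rfl⟩ := (hN g).1 hg
    exact mul_mem (mul_mem (mem_inf.1 hx).1 (mem_inf.1 hy).1) (mem_inf.1 hz).1
  have hSABN : G ⊓ (projC A B C).ker ≤ N := fun x hx ↦
    (hN x).2 ⟨x, hx, 1, one_mem _, 1, one_mem _, by group⟩
  have hSACN : G ⊓ (projB A B C).ker ≤ N := fun y hy ↦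
    (hN y).2 ⟨1, one_mem _, y, hy, 1, one_mem _, by group⟩
  have hSBCN : G ⊓ (projA A B C).ker ≤ N := fun z hz ↦
    (hN z).2 ⟨1, one_mem _, 1, one_mem _, z, hz, by group⟩
  have hnormal : ∀ g ∈ G, ∀ n ∈ N, g * n * g⁻¹ ∈ N := by
    intro g hg n hn
    obtain ⟨x, hx, y, hy, z, hz, rfl⟩ := (hN n).1 hn
    exact (hN _).2 ⟨_, conj_mem_inf_ker _ hg hx, _, conj_mem_inf_ker _ hg hy,
      _, conj_mem_inf_ker _ hg hz, by group⟩
  let eA := quotientMulEquivMapOfInfKerLe (projA A B C) G N hNG hSBCN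
  let eB := quotientMulEquivMapOfInfKerLe (projB A B C) G N hNG hSACN
  let eC := quotientMulEquivMapOfInfKerLe (projC A B C) G N hNG hSABN
  exact ⟨hnormal, ⟨eA⟩, ⟨eA.symm.trans eB⟩, ⟨eB.symm.trans eC⟩⟩
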